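/- arXiv:1403.7504 — 3 statements merged into one kernel-verified Lean document; each statement's English description precedes it below -/
import Mathlib

section
/- Let f : T → {1,...,n} be a surjective map of complexity at most 2 from a finite totally ordered set T, with n ≥ 2. Let i₀ = f(min T) and suppose f(max T) = i₀ as well (the word begins and ends with the letter i₀). Then for every letter b ≠ i₀ appearing in f, all occurrences of b lie in a single maximal i₀-free block of T, so that the restriction f_{i₀ b} has the pattern i₀...b...i₀, with all occurrences of b lying between the first and last occurrence of i₀. -/
/-- Number of adjacent unequal pairs in a word (complexity of a two-letter word). -/
def changes : List ℕ → ℕ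
  | a :: b :: l => (if a = b then 0 else 1) + changes (b :: l)
  | _ => 0

/-- Complexity of a word on the alphabet `{1, …, n}`. -/
def cplx (n : ℕ) (w : List ℕ) : ℕ :=
  ((Finset.Icc 1 n) ×ˢ (Finset.Icc 1 n)).sup fun p =>
    if p.1 < p.2 then changes (w.filter fun a => (a == p.1) || (a == p.2)) else 0

lemma changes_cons_cons_le (a b : ℕ) (l : List ℕ) :
    changes (a :: l) ≤ changes (a :: b :: l) := by
  cases l with
  | nil => simp [changes]
  | cons c t =>
    show (if a = c then 0 else 1) + changes (c :: t) ≤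
      (if a = b then 0 else 1) + ((if b = c then 0 else 1) + changes (c :: t))
    split_ifs <;> omega

lemma changes_le_cons (b : ℕ) (l : List ℕ) : changes l ≤ changes (b :: l) := by
  cases l with
  | nil => simp [changes]
  | cons c t =>
    show changes (c :: t) ≤ (if b = c then 0 else 1) + changes (c :: t)
    omega

lemma changes_cons_mono : ∀ {l₁ l₂ : List ℕ}, List.Sublist l₁ l₂ →
    ∀ a, changes (a :: l₁) ≤ changes (a :: l₂) := by
  intro l₁ l₂ h
  induction h with
  | slnil => intro a; exact le_refl _
  | cons b h ih =>
    intro a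
    exact le_trans (ih a) (changes_cons_cons_le a b _)
  | cons_cons c h ih =>
    intro a
    show (if a = c then 0 else 1) + changes (c :: _) ≤
      (if a = c then 0 else 1) + changes (c :: _)
    exact Nat.add_le_add_left (ih c) _

lemma changes_mono : ∀ {l₁ l₂ : List ℕ}, List.Sublist l₁ l₂ → changes l₁ ≤ changes l₂ := by
  intro l₁ l₂ h
  induction h with
  | slnil => exact le_refl _
  | cons b h ih => exact le_trans ih (changes_le_cons b _)
  | cons_cons c h ih => exact changes_cons_mono h c

/-- Let `f : T → {1,…,n}` be a surjective word of complexity ≤ 2 which begins and ends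
with the letter `i₀ = f(min T) = f(max T)` (with `n ≥ 2`). Then for every letter
`b ≠ i₀`, all occurrences of `b` lie in a single maximal `i₀`-free block: between any two
occurrences of `b` there is no occurrence of `i₀` (pattern `i₀ … b … i₀`). -/
theorem occurrences_in_single_block (n m : ℕ) (hm : 1 ≤ m) (hn : 2 ≤ n)
    (f : Fin m → ℕ)
    (hrange : ∀ p, f p ∈ Finset.Icc 1 n)
    (hsurj : ∀ a ∈ Finset.Icc 1 n, ∃ p, f p = a)
    (hcplx : cplx n (List.ofFn f) ≤ 2)
    (i₀ : ℕ) (h0 : f ⟨0, by omega⟩ = i₀) (hlast : f ⟨m - 1, by omega⟩ = i₀)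
    (b : ℕ) (hb : b ≠ i₀) (hbocc : ∃ p, f p = b) :
    ∀ p q r : Fin m, p ≤ q → q ≤ r → f p = b → f r = b → f q ≠ i₀ := by
  intro p q r hpq hqr hfp hfr hfq
  set w : List ℕ := List.ofFn f with hw
  -- strict inequalities of indices
  have hp0 : 0 < p.1 := by
    rcases Nat.eq_zero_or_pos p.1 with h | h
    · exfalso; apply hb
      have : p = ⟨0, by omega⟩ := Fin.ext h
      rw [← hfp, this, h0]
    · exact h
  have hpq' : p.1 < q.1 := by
    rcases lt_or_eq_of_le hpq with h | h
    · exact h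
    · exact absurd (by rw [← hfp, h, hfq]) hb
  have hqr' : q.1 < r.1 := by
    rcases lt_or_eq_of_le hqr with h | h
    · exact h
    · exfalso; apply hb; rw [← hfr, ← h, hfq]
  have hrm : r.1 < m - 1 := by
    have hr : r.1 < m := r.2
    rcases lt_or_ge r.1 (m - 1) with h | h
    · exact h
    · exfalso
      have hr1 : r.1 = m - 1 := by omega
      have : r = ⟨m - 1, by omega⟩ := Fin.ext hr1
      exact hb (by rw [← hfr, this, hlast])
  -- the alternating word is a sublist of w
  have hsub : List.Sublist [i₀, b, i₀, b, i₀] w := by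
    have hmono : StrictMono (fun ix : ℕ => match ix with
        | 0 => 0 | 1 => p.1 | 2 => q.1 | 3 => r.1 | 4 => m - 1
        | (k+5) => m + k + 5) := by
      apply strictMono_nat_of_lt_succ
      intro k
      match k with
      | 0 => exact hp0
      | 1 => exact hpq'
      | 2 => exact hqr'
      | 3 => exact hrm
      | 4 => show m - 1 < m + 0 + 5; omega
      | (j+5) => show m + j + 5 < m + (j+1) + 5; omega
    apply List.sublist_of_orderEmbedding_getElem?_eq (OrderEmbedding.ofStrictMono _ hmono)
    intro ix
    have hgw : ∀ j : ℕ, w[j]? = (if h : j < m then some (f ⟨j, h⟩) else none) := fun j => List.getElem?_ofFn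
    have hcoe : ∀ j : ℕ, (OrderEmbedding.ofStrictMono _ hmono) j =
        (match j with
        | 0 => 0 | 1 => p.1 | 2 => q.1 | 3 => r.1 | 4 => m - 1
        | (k+5) => m + k + 5) := fun j => rfl
    rw [hcoe, hgw]
    match ix with
    | 0 =>
      rw [show (match 0 with
        | 0 => 0 | 1 => p.1 | 2 => q.1 | 3 => r.1 | 4 => m - 1
        | (k+5) => m + k + 5) = 0 from rfl]
      rw [dif_pos (show 0 < m by omega)]
      exact congrArg some h0.symm
    | 1 =>
      rw [dif_pos (show p.1 < m from p.2)]
      exact congrArg some hfp.symm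
    | 2 =>
      rw [dif_pos (show q.1 < m from q.2)]
      exact congrArg some hfq.symm
    | 3 =>
      rw [dif_pos (show r.1 < m from r.2)]
      exact congrArg some hfr.symm
    | 4 =>
      rw [dif_pos (show m - 1 < m by omega)]
      exact congrArg some hlast.symm
    | (k+5) =>
      rw [dif_neg (show ¬ (m + k + 5 < m) by omega)]
      rfl
  -- letters are in range
  have hi₀ : i₀ ∈ Finset.Icc 1 n := h0 ▸ hrange _
  have hbr : b ∈ Finset.Icc 1 n := hfp ▸ hrange _
  -- choose ordered pair
  obtain ⟨x, y, hxy, hxyset⟩ : ∃ x y, x < y ∧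
      (∀ a : ℕ, ((a == x) || (a == y)) = ((a == i₀) || (a == b))) ∧
      x ∈ Finset.Icc 1 n ∧ y ∈ Finset.Icc 1 n := by
    rcases lt_or_gt_of_ne (Ne.symm hb) with h | h
    · exact ⟨i₀, b, h, fun a => rfl, hi₀, hbr⟩
    · exact ⟨b, i₀, h, fun a => Bool.or_comm _ _, hbr, hi₀⟩
  obtain ⟨hpred, hx, hy⟩ := hxyset
  -- the filtered word has ≤ 2 changes
  have hfil : changes (w.filter fun a => (a == i₀) || (a == b)) ≤ 2 := by
    have hmem : (x, y) ∈ (Finset.Icc 1 n) ×ˢ (Finset.Icc 1 n) :=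
      Finset.mem_product.mpr ⟨hx, hy⟩
    have := Finset.le_sup (f := fun p : ℕ × ℕ =>
      if p.1 < p.2 then changes (w.filter fun a => (a == p.1) || (a == p.2)) else 0) hmem
    simp only [if_pos hxy] at this
    have heq : (w.filter fun a => (a == x) || (a == y)) =
        (w.filter fun a => (a == i₀) || (a == b)) := by
      apply List.filter_congr
      intro a _
      exact hpred a
    rw [heq] at this
    exact le_trans this hcplx
  -- but the alternating word survives filtering and has 4 changes
  have hsurv : List.Sublist [i₀, b, i₀, b, i₀] (w.filter fun a => (a == i₀) || (a == b)) := by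
    have := hsub.filter (fun a => (a == i₀) || (a == b))
    rwa [List.filter_eq_self.mpr (by intro a ha; fin_cases ha <;> simp)] at this
  have h4 : changes [i₀, b, i₀, b, i₀] = 4 := by
    simp [changes, hb, Ne.symm hb]
  have := changes_mono hsurv
  omega
end

section
/- The space Mon(I, ∂I) of weakly monotone maps φ : [−1,1] → [−1,1] fixing −1 and 1 (with the induced maps of S¹ = I/(−1∼1)) is homeomorphic to the totalization Tot Δ^• = Nat(Δ^•, Δ^•) of the standard cosimplicial space, via the map sending φ to the natural transformation whose k-th component is (t₁,...,t_k) ↦ (φ(t₁),...,φ(t_k)). -/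
/-- The coface map `dⁱ : Δ^k → Δ^{k+1}` (1-indexed, `0 ≤ i ≤ k+1`) on raw tuples. -/
def dmap (k : ℕ) (i : ℕ) (t : Fin k → ℝ) : Fin (k + 1) → ℝ := fun j =>
  if (j : ℕ) + 1 ≤ i then (if h : (j : ℕ) < k then t ⟨j, h⟩ else 1)
  else if h : 1 ≤ (j : ℕ) then t ⟨(j : ℕ) - 1, by omega⟩ else -1

/-- The codegeneracy map `s^j : Δ^{k+1} → Δ^k` (1-indexed, `1 ≤ j ≤ k+1`). -/
def smap (k : ℕ) (j : ℕ) (t : Fin (k + 1) → ℝ) : Fin k → ℝ := fun l =>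
  if (l : ℕ) + 1 < j then t ⟨l, by omega⟩ else t ⟨(l : ℕ) + 1, by omega⟩

/-- The simplex `Δ^k` of weakly increasing `k`-tuples in `[−1,1]`. -/
abbrev Simplex (k : ℕ) := {t : Fin k → ℝ // Monotone t ∧ ∀ i, t i ∈ Set.Icc (-1 : ℝ) 1}

/-- Naturality: the family `α` commutes with all cofaces and codegeneracies. -/
def IsNatural (α : ∀ k, C(Simplex k, Simplex k)) : Prop :=
  (∀ k i, i ≤ k + 1 → ∀ (u : Simplex k) (v : Simplex (k + 1)),
      v.1 = dmap k i u.1 → (α (k + 1) v).1 = dmap k i (α k u).1) ∧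
  (∀ k j, 1 ≤ j → j ≤ k + 1 → ∀ (v : Simplex (k + 1)) (u : Simplex k),
      u.1 = smap k j v.1 → (α k u).1 = smap k j (α (k + 1) v).1)

/-- `Tot Δ^• = Nat(Δ^•, Δ^•)`: families of continuous maps `Δ^k → Δ^k` commuting with
cofaces and codegeneracies, with the compact-open topology. -/
abbrev TotDelta := {α : ∀ k, C(Simplex k, Simplex k) // IsNatural α}

/-- `Mon(I, ∂I)`: continuous weakly monotone self-maps of `[−1,1]` fixing the
endpoints, with the compact-open topology. -/
abbrev MonI := {φ : C(Set.Icc (-1 : ℝ) 1, Set.Icc (-1 : ℝ) 1) //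
  Monotone (fun x => φ x) ∧ φ ⟨-1, by norm_num⟩ = ⟨-1, by norm_num⟩ ∧
  φ ⟨1, by norm_num⟩ = ⟨1, by norm_num⟩}

section Aux

local notation "II" => Set.Icc (-1:ℝ) 1

lemma phi_congr (φ : MonI) {x y : ℝ} (hx : x ∈ II) (hy : y ∈ II) (h : x = y) :
    (φ.1 ⟨x, hx⟩ : ℝ) = φ.1 ⟨y, hy⟩ := by subst h; rfl

lemma smap_mono (k j : ℕ) {t : Fin (k+1) → ℝ} (ht : Monotone t) : Monotone (smap k j t) := by
  intro a b hab
  have h : (a : ℕ) ≤ b := hab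
  unfold smap
  split_ifs <;> exact ht (Fin.mk_le_mk.mpr (by omega))

lemma smap_mem (k j : ℕ) {t : Fin (k+1) → ℝ} (ht : ∀ i, t i ∈ II) :
    ∀ l, smap k j t l ∈ II := by
  intro l; unfold smap; split_ifs <;> apply ht

/-- The codegeneracy as a map of simplices. -/
def sProj (k j : ℕ) (v : Simplex (k+1)) : Simplex k :=
  ⟨smap k j v.1, smap_mono k j v.2.1, smap_mem k j v.2.2⟩

/-- A point of `Δ^1`. -/
def sing (x : ℝ) (hx : x ∈ II) : Simplex 1 :=
  ⟨fun _ => x, monotone_const, fun _ => hx⟩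

lemma sing_eq {x y : ℝ} (hx : x ∈ II) (hy : y ∈ II) (h : x = y) :
    sing x hx = sing y hy := by subst h; rfl

/-- A natural family is determined coordinatewise by its value on `Δ^1`. -/
lemma det {α : ∀ k, C(Simplex k, Simplex k)} (hα : IsNatural α) :
    ∀ (k : ℕ) (t : Simplex k) (i : Fin k),
      (α k t).1 i = (α 1 (sing (t.1 i) (t.2.2 i))).1 0 := by
  intro k
  induction k with
  | zero => intro t i; exact i.elim0
  | succ k ih =>
    intro t i
    rcases lt_or_eq_of_le (Nat.lt_succ_iff.mp i.isLt) with hik | hik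
    · -- drop the last coordinate via `s^{k+1}`
      set u := sProj k (k+1) t with hu
      have hnat := hα.2 k (k+1) (by omega) le_rfl t u rfl
      have h1 : (α (k+1) t).1 i = (α k u).1 ⟨i, hik⟩ := by
        have := congrFun hnat ⟨(i : ℕ), hik⟩
        rw [this]
        unfold smap
        rw [if_pos (show (i : ℕ) + 1 < k + 1 by omega)]
      have h2 : u.1 ⟨(i : ℕ), hik⟩ = t.1 i := by
        show smap k (k+1) t.1 _ = _
        unfold smap
        rw [if_pos (show (i : ℕ) + 1 < k + 1 by omega)]
      rw [h1, ih u ⟨i, hik⟩, sing_eq (u.2.2 _) (t.2.2 i) h2]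
    · -- i is the last coordinate
      rcases Nat.eq_zero_or_pos k with hk | hk
      · -- k = 0 : t itself is a 1-simplex equal to `sing (t.1 i)`
        subst hk
        have hi0 : i = 0 := Fin.ext (by omega)
        subst hi0
        have : t = sing (t.1 0) (t.2.2 0) := by
          apply Subtype.ext; funext j
          have : j = 0 := Fin.ext (by omega)
          rw [this]; rfl
        conv_lhs => rw [this]
      · -- drop the first coordinate via `s^1`
        set u := sProj k 1 t with hu
        have hnat := hα.2 k 1 le_rfl (by omega) t u rfl
        have hidx : (⟨k - 1 + 1, by omega⟩ : Fin (k+1)) = i := by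
          apply Fin.ext; show k - 1 + 1 = (i : ℕ); omega
        have h1 : (α (k+1) t).1 i = (α k u).1 ⟨k - 1, by omega⟩ := by
          have := congrFun hnat (⟨k - 1, by omega⟩ : Fin k)
          rw [this]
          unfold smap
          rw [if_neg (show ¬(k - 1 + 1 < 1) by omega)]
          exact congrArg _ hidx.symm
        have h2 : u.1 ⟨k - 1, by omega⟩ = t.1 i := by
          show smap k 1 t.1 _ = _
          unfold smap
          rw [if_neg (show ¬(k - 1 + 1 < 1) by omega)]
          exact congrArg _ hidx
        rw [h1, ih u ⟨k - 1, by omega⟩, sing_eq (u.2.2 _) (t.2.2 i) h2]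

/-- The forward map on each level: apply `φ` coordinatewise. -/
def Fmap (φ : MonI) (k : ℕ) : C(Simplex k, Simplex k) where
  toFun t := ⟨fun i => (φ.1 ⟨t.1 i, t.2.2 i⟩ : ℝ),
    fun a b hab => Subtype.coe_le_coe.mpr (φ.2.1 (Subtype.mk_le_mk.mpr (t.2.1 hab))),
    fun i => (φ.1 _).2⟩
  continuous_toFun := by
    apply Continuous.subtype_mk
    apply continuous_pi
    intro i
    exact continuous_subtype_val.comp (φ.1.continuous.comp
      (Continuous.subtype_mk ((continuous_apply i).comp continuous_subtype_val) _))

lemma phi_one (φ : MonI) (h : (1:ℝ) ∈ II) : (φ.1 ⟨1, h⟩ : ℝ) = 1 := by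
  rw [φ.2.2.2]

lemma phi_neg_one (φ : MonI) (h : (-1:ℝ) ∈ II) : (φ.1 ⟨-1, h⟩ : ℝ) = -1 := by
  rw [φ.2.2.1]

lemma Fmap_natural (φ : MonI) : IsNatural (Fmap φ) := by
  constructor
  · intro k i hi u v hv
    funext j
    show (φ.1 ⟨v.1 j, v.2.2 j⟩ : ℝ) = dmap k i (fun l => (φ.1 ⟨u.1 l, u.2.2 l⟩ : ℝ)) j
    have hcj : v.1 j = dmap k i u.1 j := congrFun hv j
    by_cases h1 : (j : ℕ) + 1 ≤ i
    · by_cases h2 : (j : ℕ) < k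
      · have hval : dmap k i u.1 j = u.1 ⟨j, h2⟩ := by simp [dmap, h1, h2]
        rw [phi_congr φ (v.2.2 j) (u.2.2 _) (hcj.trans hval)]
        simp [dmap, h1, h2]
      · have hval : dmap k i u.1 j = 1 := by simp [dmap, h1, h2]
        rw [phi_congr φ (v.2.2 j) (by norm_num) (hcj.trans hval), phi_one]
        simp [dmap, h1, h2]
    · by_cases h2 : 1 ≤ (j : ℕ)
      · have hval : dmap k i u.1 j = u.1 ⟨(j:ℕ) - 1, by omega⟩ := by simp [dmap, h1, h2]
        rw [phi_congr φ (v.2.2 j) (u.2.2 _) (hcj.trans hval)]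
        simp [dmap, h1, h2]
      · have hval : dmap k i u.1 j = -1 := by simp [dmap, h1, h2]
        rw [phi_congr φ (v.2.2 j) (by norm_num) (hcj.trans hval), phi_neg_one]
        simp [dmap, h1, h2]
  · intro k j hj1 hj2 v u hu
    funext l
    show (φ.1 ⟨u.1 l, u.2.2 l⟩ : ℝ) = smap k j (fun m => (φ.1 ⟨v.1 m, v.2.2 m⟩ : ℝ)) l
    have hcl : u.1 l = smap k j v.1 l := congrFun hu l
    by_cases h : (l : ℕ) + 1 < j
    · have hval : smap k j v.1 l = v.1 ⟨l, by omega⟩ := by simp [smap, h]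
      rw [phi_congr φ (u.2.2 l) (v.2.2 _) (hcl.trans hval)]
      simp [smap, h]
    · have hval : smap k j v.1 l = v.1 ⟨(l:ℕ) + 1, by omega⟩ := by simp [smap, h]
      rw [phi_congr φ (u.2.2 l) (v.2.2 _) (hcl.trans hval)]
      simp [smap, h]

/-- The forward map `Mon(I,∂I) → Tot Δ^•`. -/
def Fwd (φ : MonI) : TotDelta := ⟨Fmap φ, Fmap_natural φ⟩

/-- Inclusion `I → Δ^1`. -/
def iota : C(II, Simplex 1) :=
  ⟨fun x => sing x.1 x.2, by
    apply Continuous.subtype_mk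
    exact continuous_pi fun _ => continuous_subtype_val⟩

/-- Projection `Δ^1 → I`. -/
def proj1 : C(Simplex 1, II) :=
  ⟨fun s => ⟨s.1 0, s.2.2 0⟩, by
    apply Continuous.subtype_mk
    exact (continuous_apply 0).comp continuous_subtype_val⟩

/-- The underlying continuous self-map of `I` obtained from a natural family. -/
def bwdMap (α : TotDelta) : C(II, II) := proj1.comp ((α.1 1).comp iota)

lemma bwdMap_apply (α : TotDelta) (x : II) :
    (bwdMap α x : ℝ) = (α.1 1 (sing x.1 x.2)).1 0 := rfl

lemma dmap_zero (t : Fin 0 → ℝ) (j : Fin 1) : dmap 0 0 t j = -1 := by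
  unfold dmap
  rw [if_neg (by omega), dif_neg (by have := j.isLt; omega)]

lemma dmap_one (t : Fin 0 → ℝ) (j : Fin 1) : dmap 0 1 t j = 1 := by
  unfold dmap
  rw [if_pos (by have := j.isLt; omega), dif_neg (by omega)]

/-- The 0-simplex. -/
def pt0 : Simplex 0 := ⟨fun i => i.elim0, fun a => a.elim0, fun i => i.elim0⟩

lemma bwd_endpoint (α : TotDelta) (i : ℕ) (hi : i ≤ 1) (c : ℝ) (hc : c ∈ II)
    (hval : ∀ (t : Fin 0 → ℝ) (j : Fin 1), dmap 0 i t j = c) :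
    (α.1 1 (sing c hc)).1 0 = c := by
  have hs : (sing c hc).1 = dmap 0 i pt0.1 := by
    funext j; rw [hval pt0.1 j]; rfl
  have := α.2.1 0 i hi pt0 (sing c hc) hs
  have h0 := congrFun this 0
  rw [h0, hval _ 0]

/-- Pair `(x,y)` as a 2-simplex. -/
def pair (x y : ℝ) (hx : x ∈ II) (hy : y ∈ II) (hxy : x ≤ y) : Simplex 2 :=
  ⟨fun i => if (i : ℕ) = 0 then x else y, by
    intro a b hab
    have h : (a : ℕ) ≤ b := hab
    dsimp only
    split_ifs <;> first | rfl | exact hxy | omega, by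
    intro i; dsimp only; split_ifs <;> assumption⟩

/-- The backward map `Tot Δ^• → Mon(I,∂I)`. -/
def Bwd (α : TotDelta) : MonI := by
  refine ⟨bwdMap α, ?_, ?_, ?_⟩
  · intro x y hxy
    have hxy' : (x : ℝ) ≤ y := hxy
    set p := pair x.1 y.1 x.2 y.2 hxy' with hp
    have h0 : (α.1 2 p).1 0 = (bwdMap α x : ℝ) := by
      rw [det α.2 2 p 0, bwdMap_apply]
      exact congrArg (fun s => (α.1 1 s).1 0) (sing_eq _ _ (by simp [hp, pair]))
    have h1 : (α.1 2 p).1 1 = (bwdMap α y : ℝ) := by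
      rw [det α.2 2 p 1, bwdMap_apply]
      exact congrArg (fun s => (α.1 1 s).1 0) (sing_eq _ _ (by simp [hp, pair]))
    have hm : (α.1 2 p).1 0 ≤ (α.1 2 p).1 1 := (α.1 2 p).2.1 (by norm_num [Fin.le_def])
    rw [h0, h1] at hm
    exact Subtype.coe_le_coe.mp hm
  · apply Subtype.ext
    show (bwdMap α ⟨-1, _⟩ : ℝ) = -1
    rw [bwdMap_apply]
    exact bwd_endpoint α 0 (by omega) (-1) (by norm_num)
      dmap_zero
  · apply Subtype.ext
    show (bwdMap α ⟨1, _⟩ : ℝ) = 1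
    rw [bwdMap_apply]
    exact bwd_endpoint α 1 le_rfl 1 (by norm_num)
      dmap_one

lemma left_inv : Function.LeftInverse Bwd Fwd := by
  intro φ
  apply Subtype.ext
  apply ContinuousMap.ext
  intro x
  apply Subtype.ext
  show (Fmap φ 1 (sing x.1 x.2)).1 0 = (φ.1 x : ℝ)
  show (φ.1 ⟨x.1, x.2⟩ : ℝ) = (φ.1 x : ℝ)
  congr 1

lemma right_inv : Function.RightInverse Bwd Fwd := by
  intro α
  apply Subtype.ext
  funext k
  apply ContinuousMap.ext
  intro t
  apply Subtype.ext
  funext i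
  show ((Bwd α).1 ⟨t.1 i, t.2.2 i⟩ : ℝ) = (α.1 k t).1 i
  rw [det α.2 k t i]
  exact bwdMap_apply α ⟨t.1 i, t.2.2 i⟩

lemma fwd_continuous : Continuous Fwd := by
  apply Continuous.subtype_mk
  apply continuous_pi
  intro k
  apply ContinuousMap.continuous_of_continuous_uncurry
  apply Continuous.subtype_mk
  apply continuous_pi
  intro i
  have h1 : Continuous fun p : MonI × Simplex k => (⟨p.2.1 i, p.2.2.2 i⟩ : II) :=
    Continuous.subtype_mk ((continuous_apply i).comp
      (continuous_subtype_val.comp continuous_snd)) _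
  have h2 : Continuous fun p : MonI × Simplex k => (p.1.1 : C(II, II)) :=
    continuous_subtype_val.comp continuous_fst
  exact continuous_subtype_val.comp (ContinuousEval.continuous_eval.comp (h2.prodMk h1))

lemma bwd_continuous : Continuous Bwd := by
  apply Continuous.subtype_mk
  show Continuous fun α : TotDelta => proj1.comp ((α.1 1).comp iota)
  exact (ContinuousMap.continuous_postcomp proj1).comp
    ((ContinuousMap.continuous_precomp iota).comp
      ((continuous_apply 1).comp continuous_subtype_val))

end Aux

/-- `Mon(I, ∂I)` is homeomorphic to `Tot Δ^•` via the map sending `φ` to the natural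
transformation `(t₁,…,t_k) ↦ (φ(t₁),…,φ(t_k))`. -/
theorem mon_homeo_totDelta :
    ∃ H : MonI ≃ₜ TotDelta, ∀ (φ : MonI) (k : ℕ) (t : Simplex k) (i : Fin k),
      ((H φ).1 k t).1 i = (φ.1 ⟨t.1 i, t.2.2 i⟩ : ℝ) := by
  refine ⟨⟨⟨Fwd, Bwd, left_inv, right_inv⟩, fwd_continuous, bwd_continuous⟩,
    fun φ k t i => rfl⟩
end

section
/- Define φ : S¹ → F₂(2) (where S¹ = [−1,1]/(−1∼1)) by: for −1 < τ < 0, φ(τ) is the configuration (I₁ = [−1,τ]∪[1+τ,1], I₂ = [τ,1+τ]); for 0 < τ < 1, φ(τ) = (I₁ = [τ−1,τ], I₂ = [−1,τ−1]∪[τ,1]); φ(0) = ([−1,0],[0,1]); φ(±1) = ([0,1],[−1,0]). Then φ is a bijection (in fact a homeomorphism) from S¹ onto the space F₂(2) of pairs (I₁,I₂) of 1-submanifolds of the circle with disjoint interiors, equal length 1, union S¹, and associated word of complexity ≤ 2. -/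
open MeasureTheory

instance : Fact ((0 : ℝ) < 2) := ⟨by norm_num⟩

/-- The quotient map from `ℝ` to the circle `S¹ = ℝ/2ℤ ≅ [−1,1]/(−1∼1)`. -/
noncomputable def cir (τ : ℝ) : AddCircle (2 : ℝ) := (τ : AddCircle (2 : ℝ))

/-- The space `F₂(2)` (denoted `ℐ₂(2)` in the paper): pairs `(I₁, I₂)` of closed
connected 1-submanifolds (arcs) of the circle with disjoint interiors, union the whole
circle, and equal length; connectedness encodes the complexity ≤ 2 condition on the
associated two-letter word. -/
def F22 : Set (Set (AddCircle (2 : ℝ)) × Set (AddCircle (2 : ℝ))) :=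
  {q | IsClosed q.1 ∧ IsClosed q.2 ∧ q.1 ∪ q.2 = Set.univ ∧
       interior q.1 ∩ interior q.2 = ∅ ∧ IsConnected q.1 ∧ IsConnected q.2 ∧
       volume q.1 = volume q.2}

/-- The map `φ : S¹ → F₂(2)`: in the uniform description,
`φ(τ) = (I₁, I₂)` with `I₁` the arc `[τ−1, τ]` and `I₂` the arc `[τ, τ+1]`
(this agrees with the case-by-case formulas for `−1 < τ < 0`, `0 < τ < 1`, `τ = 0`,
`τ = ±1`). -/
noncomputable def PhiMap (τ : ℝ) :
    Set (AddCircle (2 : ℝ)) × Set (AddCircle (2 : ℝ)) :=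
  (cir '' Set.Icc (τ - 1) τ, cir '' Set.Icc τ (τ + 1))

/-! `φ(τ)` is the pair of complementary half-circles `[τ - 1, τ]`, `[τ, τ + 1]`; it depends only
on `τ` mod 2, and `φ(τ - 1)` is `φ(τ)` with its two arcs swapped. Since the two arcs of `φ(τ)` are
distinct and meet only at `τ - 1` and `τ`, `φ(τ) = φ(τ')` forces `τ' ≡ τ`. Conversely, a closed
connected proper subset of the circle is an arc. If two arcs of equal length cover the circle and
have disjoint interiors, comparing measures shows both have length 1, and disjointness of the open
arcs makes them complementary, so the pair is `φ(b)` for `b` the right end of the first arc. -/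

open Set

theorem interior_inter_interior_eq_empty_of_measure_add_le {X : Type*} [TopologicalSpace X]
    [MeasurableSpace X] {μ : Measure X} [IsFiniteMeasure μ] [μ.IsOpenPosMeasure]
    {A B : Set X} (hB : MeasurableSet B) (h : μ A + μ B ≤ μ (A ∪ B)) :
    interior A ∩ interior B = ∅ := by
  have hnull : μ (A ∩ B) = 0 := by
    rw [← measure_union_add_inter A hB] at h
    exact nonpos_iff_eq_zero.mp
      (ENNReal.le_of_add_le_add_left (measure_ne_top μ _) (h.trans_eq (add_zero _).symm))
  exact (isOpen_interior.inter isOpen_interior).measure_eq_zero_iff μ |>.mp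
    (measure_mono_null (inter_subset_inter interior_subset interior_subset) hnull)

namespace AddCircle

theorem image_coe_Icc_eq_image_const_add {T : ℝ} (a b : ℝ) :
    ((↑) '' Icc a b : Set (AddCircle T)) = ((a : AddCircle T) + ·) '' ((↑) '' Icc 0 (b - a)) := by
  have hIcc : Icc a b = (a + ·) '' Icc 0 (b - a) := by
    rw [image_const_add_Icc, add_zero, add_sub_cancel]
  rw [hIcc, image_image, image_image]
  simp only [coe_add]

theorem image_coe_Icc_eq_of_coe_eq {T a b c d : ℝ} (h : (a : AddCircle T) = c)
    (hlen : b - a = d - c) :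
    ((↑) '' Icc a b : Set (AddCircle T)) = (↑) '' Icc c d := by
  rw [image_coe_Icc_eq_image_const_add a b, image_coe_Icc_eq_image_const_add c d, h, hlen]

theorem coe_notMem_image_coe_Icc {T a b x : ℝ} [Fact (0 < T)] (hax : a ≤ x) (hxT : x < a + T)
    (hbx : b < x) : (x : AddCircle T) ∉ ((↑) '' Icc a b : Set (AddCircle T)) := by
  rintro ⟨s, hs, hsx⟩
  have : s = x := (coe_eq_coe_iff_of_mem_Ico ⟨hs.1, by linarith [hs.2]⟩ ⟨hax, hxT⟩).mp hsx
  linarith [hs.2]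

theorem union_image_coe_Icc_eq_univ {T a b : ℝ} [Fact (0 < T)] (hab : a ≤ b) (hbT : b ≤ a + T) :
    ((↑) '' Icc a b ∪ (↑) '' Icc b (a + T) : Set (AddCircle T)) = univ := by
  rw [← image_union, Icc_union_Icc_eq_Icc hab hbT, coe_image_Icc_eq]

theorem image_coe_Icc_inter_subset {T a b : ℝ} [Fact (0 < T)] (hab : a ≤ b) :
    ((↑) '' Icc a b ∩ (↑) '' Icc b (a + T) : Set (AddCircle T)) ⊆ {(a : AddCircle T), ↑b} := by
  rintro _ ⟨hy, s, hs, rfl⟩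
  rcases hs.1.eq_or_lt with rfl | hbs
  · exact Or.inr rfl
  rcases hs.2.eq_or_lt with rfl | hsT
  · exact Or.inl (coe_add_period T a)
  · exact absurd hy (coe_notMem_image_coe_Icc (hab.trans hbs.le) hsT hbs)

theorem isClosed_image_coe_Icc {T : ℝ} [Fact (0 < T)] (a b : ℝ) :
    IsClosed ((↑) '' Icc a b : Set (AddCircle T)) :=
  (isCompact_Icc.image (f := ((↑) : ℝ → AddCircle T)) continuous_quotient_mk').isClosed

theorem isOpen_image_coe_Ioo {T : ℝ} (a b : ℝ) : IsOpen ((↑) '' Ioo a b : Set (AddCircle T)) :=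
  QuotientAddGroup.isOpenMap_coe _ isOpen_Ioo

theorem image_coe_Ioo_subset_interior {T : ℝ} (a b : ℝ) :
    ((↑) '' Ioo a b : Set (AddCircle T)) ⊆ interior ((↑) '' Icc a b) :=
  interior_maximal (image_mono Ioo_subset_Icc_self) (isOpen_image_coe_Ioo a b)

theorem volume_image_coe_of_subset_Ioc {T t : ℝ} [Fact (0 < T)] {S : Set ℝ}
    (hS : S ⊆ Ioc t (t + T)) (hm : MeasurableSet ((↑) '' S : Set (AddCircle T))) :
    volume ((↑) '' S : Set (AddCircle T)) = volume S := by
  have hinj : InjOn ((↑) : ℝ → AddCircle T) (Ioc t (t + T)) := fun _ hx _ hy h =>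
    (coe_eq_coe_iff_of_mem_Ioc hx hy).mp h
  rw [add_projection_respects_measure T t hm, hinj.preimage_image_inter hS]

theorem volume_image_coe_Icc {T a b : ℝ} [Fact (0 < T)] (h : b - a < T) :
    volume ((↑) '' Icc a b : Set (AddCircle T)) = ENNReal.ofReal (b - a) := by
  rw [volume_image_coe_of_subset_Ioc (t := b - T) (fun x hx => ⟨by linarith [hx.1], by
      linarith [hx.2]⟩) (isClosed_image_coe_Icc a b).measurableSet,
    Real.volume_Icc]

theorem volume_image_coe_Ioo {T a b : ℝ} [Fact (0 < T)] (h : b - a < T) :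
    volume ((↑) '' Ioo a b : Set (AddCircle T)) = ENNReal.ofReal (b - a) := by
  rw [volume_image_coe_of_subset_Ioc (t := b - T) (fun x hx => ⟨by linarith [hx.1], by
      linarith [hx.2]⟩) (isOpen_image_coe_Ioo a b).measurableSet,
    Real.volume_Ioo]

theorem le_add_of_union_image_coe_Icc_eq_univ {T a b c d : ℝ} [Fact (0 < T)] (hab : a ≤ b)
    (hcd : c ≤ d) (hbT : b - a < T) (hdT : d - c < T)
    (h : ((↑) '' Icc a b ∪ (↑) '' Icc c d : Set (AddCircle T)) = univ) :
    T ≤ (b - a) + (d - c) := by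
  have := measure_union_le (μ := volume) ((↑) '' Icc a b : Set (AddCircle T)) ((↑) '' Icc c d)
  rw [h, AddCircle.measure_univ, volume_image_coe_Icc hbT, volume_image_coe_Icc hdT,
    ← ENNReal.ofReal_add (by linarith) (by linarith)] at this
  exact (ENNReal.ofReal_le_ofReal_iff (by linarith)).mp this

theorem add_le_of_disjoint_image_coe_Ioo {T a b c d : ℝ} [Fact (0 < T)] (hab : a ≤ b)
    (hcd : c ≤ d) (hbT : b - a < T) (hdT : d - c < T)
    (h : Disjoint ((↑) '' Ioo a b : Set (AddCircle T)) ((↑) '' Ioo c d)) :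
    (b - a) + (d - c) ≤ T := by
  have := (measure_union h (isOpen_image_coe_Ioo c d).measurableSet).symm.trans_le
    (measure_mono (μ := volume) (subset_univ _))
  rw [AddCircle.measure_univ, volume_image_coe_Ioo hbT, volume_image_coe_Ioo hdT,
    ← ENNReal.ofReal_add (by linarith) (by linarith)] at this
  exact (ENNReal.ofReal_le_ofReal_iff (Fact.out : 0 < T).le).mp this

theorem coe_eq_coe_of_disjoint_image_coe_Ioo {T a b c d : ℝ} [Fact (0 < T)] (hab : a < b)
    (hcd : c < d) (hT : (b - a) + (d - c) = T)
    (h : Disjoint ((↑) '' Ioo a b : Set (AddCircle T)) ((↑) '' Ioo c d)) :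
    (c : AddCircle T) = b := by
  set r : ℝ := (equivIco T b c : ℝ)
  have hr : r ∈ Ico b (b + T) := (equivIco T b c).2
  have hrc : (r : AddCircle T) = c := coe_equivIco
  rcases hr.1.eq_or_lt with hbr | hbr
  · rw [← hrc, hbr]
  -- otherwise a point of `(a + T, b + T) ∩ (r, r + (d - c))` lies on both open arcs
  obtain ⟨t, ht₁, ht₂⟩ := exists_between (max_lt (lt_min (by linarith) (by linarith))
    (lt_min hr.2 (by linarith)) : max (a + T) r < min (b + T) (r + (d - c)))
  rw [max_lt_iff] at ht₁
  rw [lt_min_iff] at ht₂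
  have ht_ab : (t : AddCircle T) ∈ (↑) '' Ioo a b :=
    ⟨t - T, ⟨by linarith, by linarith⟩, by rw [coe_sub, coe_period, sub_zero]⟩
  have ht_cd : (t : AddCircle T) ∈ (↑) '' Ioo c d :=
    ⟨t - r + c, ⟨by linarith, by linarith⟩, by rw [coe_add, coe_sub, hrc, sub_add_cancel]⟩
  exact absurd ht_cd (disjoint_left.mp h ht_ab)

theorem exists_eq_image_coe_Icc_of_isClosed {T : ℝ} [Fact (0 < T)] {C : Set (AddCircle T)}
    (hC : IsClosed C) (hconn : IsConnected C) (hne : C ≠ univ) :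
    ∃ a b : ℝ, a ≤ b ∧ b - a < T ∧ C = (↑) '' Icc a b := by
  obtain ⟨_, hx⟩ := (ne_univ_iff_exists_notMem C).mp hne
  obtain ⟨z, rfl⟩ := QuotientAddGroup.mk_surjective ‹AddCircle T›
  -- cutting the circle at a point outside `C` lifts `C` continuously into `(z, z + T)`
  set g : AddCircle T → ℝ := fun y => equivIco T z y
  have hne_z : ∀ y ∈ C, y ≠ z := fun y hy hyz => hx (hyz ▸ hy)
  have hgC : g '' C ⊆ Ioo z (z + T) := by
    rintro _ ⟨y, hy, rfl⟩
    refine ⟨(equivIco T z y).2.1.lt_of_ne fun hz => hne_z y hy ?_, (equivIco T z y).2.2⟩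
    rw [← coe_equivIco (a := z) (y := y)]
    exact congrArg _ hz.symm
  have hcont : ContinuousOn g C := fun y hy =>
    (continuous_subtype_val.continuousAt.comp
      (continuousAt_equivIco T z (hne_z y hy))).continuousWithinAt
  have hK := hC.isCompact.image_of_continuousOn hcont
  have hIcc := eq_Icc_of_connected_compact (hconn.image g hcont) hK
  have hle := csInf_le_csSup (hconn.nonempty.image g) hK.bddBelow hK.bddAbove
  refine ⟨_, _, hle, ?_, ?_⟩
  · have := (Icc_subset_Ioo_iff hle).mp (hIcc ▸ hgC)
    linarith
  · rw [← hIcc, image_image]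
    simp only [g, coe_equivIco, image_id']

end AddCircle

open AddCircle

theorem phiMap_def (τ : ℝ) :
    PhiMap τ = (((↑) : ℝ → AddCircle (2 : ℝ)) '' Icc (τ - 1) τ, (↑) '' Icc τ (τ + 1)) := rfl

theorem phiMap_mem_F22 (τ : ℝ) : PhiMap τ ∈ F22 := by
  have h₁ : volume (PhiMap τ).1 = ENNReal.ofReal 1 := by
    rw [phiMap_def, volume_image_coe_Icc (by linarith), sub_sub_cancel]
  have h₂ : volume (PhiMap τ).2 = ENNReal.ofReal 1 := by
    rw [phiMap_def, volume_image_coe_Icc (by linarith), add_sub_cancel_left]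
  have hU : (PhiMap τ).1 ∪ (PhiMap τ).2 = univ := by
    have := union_image_coe_Icc_eq_univ (T := 2) (a := τ - 1) (b := τ) (by linarith)
      (by linarith)
    rwa [show τ - 1 + 2 = τ + 1 by ring] at this
  refine ⟨isClosed_image_coe_Icc _ _, isClosed_image_coe_Icc _ _, hU, ?_, ?_, ?_,
    h₁.trans h₂.symm⟩
  · refine interior_inter_interior_eq_empty_of_measure_add_le (μ := volume)
      (isClosed_image_coe_Icc _ _).measurableSet ?_
    rw [hU, h₁, h₂, AddCircle.measure_univ, ← ENNReal.ofReal_add zero_le_one zero_le_one]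
    norm_num
  · exact (isConnected_Icc (by linarith)).image _ continuous_quotient_mk'.continuousOn
  · exact (isConnected_Icc (by linarith)).image _ continuous_quotient_mk'.continuousOn

theorem phiMap_congr {τ τ' : ℝ} (h : cir τ = cir τ') : PhiMap τ = PhiMap τ' := by
  have h' : ((τ - 1 : ℝ) : AddCircle (2 : ℝ)) = (τ' - 1 : ℝ) := by
    rw [coe_sub, coe_sub]
    exact congrArg (· - _) h
  rw [phiMap_def, phiMap_def]
  exact Prod.ext (image_coe_Icc_eq_of_coe_eq h' (by ring)) (image_coe_Icc_eq_of_coe_eq h (by ring))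

theorem phiMap_sub_one (τ : ℝ) : PhiMap (τ - 1) = (PhiMap τ).swap := by
  have h : ((τ - 1 - 1 : ℝ) : AddCircle (2 : ℝ)) = τ := by
    rw [show τ - 1 - 1 = τ - 2 by ring, coe_sub, coe_period, sub_zero]
  rw [phiMap_def, phiMap_def, sub_add_cancel]
  exact Prod.ext (image_coe_Icc_eq_of_coe_eq h (by ring)) rfl

theorem phiMap_fst_ne_snd (τ : ℝ) : (PhiMap τ).1 ≠ (PhiMap τ).2 := by
  intro h
  have hmid : cir (τ + 1 / 2) ∈ (PhiMap τ).2 := ⟨τ + 1 / 2, ⟨by linarith, by linarith⟩, rfl⟩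
  rw [← h] at hmid
  exact coe_notMem_image_coe_Icc (a := τ - 1) (b := τ) (by linarith) (by linarith)
    (by linarith) hmid

theorem phiMap_fst_inter_snd_subset (τ : ℝ) :
    (PhiMap τ).1 ∩ (PhiMap τ).2 ⊆ {cir (τ - 1), cir τ} := by
  have := image_coe_Icc_inter_subset (T := 2) (a := τ - 1) (b := τ) (by linarith)
  rwa [show τ - 1 + 2 = τ + 1 by ring] at this

theorem cir_eq_of_phiMap_eq {τ τ' : ℝ} (h : PhiMap τ = PhiMap τ') : cir τ = cir τ' := by
  have hmem : cir τ' ∈ (PhiMap τ).1 ∩ (PhiMap τ).2 :=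
    h ▸ ⟨⟨τ', ⟨by linarith, le_rfl⟩, rfl⟩, ⟨τ', ⟨le_rfl, by linarith⟩, rfl⟩⟩
  rcases phiMap_fst_inter_snd_subset τ hmem with h' | h'
  · have hswap : PhiMap τ = (PhiMap τ).swap := by rw [← phiMap_sub_one, ← phiMap_congr h', h]
    exact absurd (congrArg Prod.fst hswap) (phiMap_fst_ne_snd τ)
  · exact h'.symm

theorem exists_phiMap_eq {q : Set (AddCircle (2 : ℝ)) × Set (AddCircle (2 : ℝ))} (hq : q ∈ F22) :
    ∃ τ, PhiMap τ = q := by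
  obtain ⟨A, B⟩ := q
  obtain ⟨hA, hB, hAB, hint, hcA, hcB, hvol⟩ := hq
  have hne : ∀ {X Y : Set (AddCircle (2 : ℝ))}, IsClosed Y → volume X = volume Y →
      interior X ∩ interior Y = ∅ → X ≠ univ := by
    rintro X Y hY hXY hXY' rfl
    rw [(hY.measure_eq_univ_iff_eq (μ := volume)).mp hXY.symm, interior_univ, inter_self] at hXY'
    exact univ_nonempty.ne_empty hXY'
  obtain ⟨a, b, hab, hbT, rfl⟩ :=
    exists_eq_image_coe_Icc_of_isClosed hA hcA (hne hB hvol hint)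
  obtain ⟨c, d, hcd, hdT, rfl⟩ :=
    exists_eq_image_coe_Icc_of_isClosed hB hcB (hne hA hvol.symm (inter_comm _ _ ▸ hint))
  rw [volume_image_coe_Icc hbT, volume_image_coe_Icc hdT,
    ENNReal.ofReal_eq_ofReal_iff (by linarith) (by linarith)] at hvol
  have hdisj := ((disjoint_iff_inter_eq_empty.mpr hint).mono
    (image_coe_Ioo_subset_interior a b) (image_coe_Ioo_subset_interior c d))
  have hge := le_add_of_union_image_coe_Icc_eq_univ hab hcd hbT hdT hAB
  have hle := add_le_of_disjoint_image_coe_Ioo hab hcd hbT hdT hdisj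
  have hcb : (c : AddCircle (2 : ℝ)) = b :=
    coe_eq_coe_of_disjoint_image_coe_Ioo (by linarith) (by linarith) (by linarith) hdisj
  refine ⟨b, ?_⟩
  rw [phiMap_def, show b - 1 = a by linarith, image_coe_Icc_eq_of_coe_eq hcb.symm (by linarith)]

/-- `φ` descends to `S¹ = [−1,1]/(−1∼1)` and is a bijection from `S¹` onto `F₂(2)`. -/
theorem phi_bijection :
    (∀ τ : ℝ, PhiMap τ ∈ F22) ∧
    (∀ τ τ' : ℝ, cir τ = cir τ' → PhiMap τ = PhiMap τ') ∧
    (∀ τ τ' : ℝ, PhiMap τ = PhiMap τ' → cir τ = cir τ') ∧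
    (∀ q ∈ F22, ∃ τ : ℝ, PhiMap τ = q) :=
  ⟨phiMap_mem_F22, fun _ _ => phiMap_congr, fun _ _ => cir_eq_of_phiMap_eq,
    fun _ => exists_phiMap_eq⟩
end
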